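/- Let p > 1, R > 1, T > 0, j ∈ {0,1}, and a, b ∈ ℝ. Define the weight w(|x|,t) := 1 if a > 0; (log(t+|x|+3R))⁻¹ if a = 0; (t+|x|+3R)^a if a < 0, and the weighted norm ‖U‖₂ := sup_{(x,t)∈ℝ×[0,T]} w(|x|,t)|U(x,t)|. Define D(T) := 1 if a > 0; log(T+3R) if a = 0; (T+2R)^{−a} if a < 0. Let L(V)(x,t) := (1/2)∫₀^t ∫_{x−t+s}^{x+t−s} V(y,s) ⟨s+⟨y⟩⟩^{−(1+a)} ⟨s−⟨y⟩⟩^{−(1+b)} dy ds. Suppose U, U⁰ ∈ C(ℝ×[0,T]) satisfy supp U ⊂ {|x| ≤ t+R} and supp U⁰ ⊂ {(t−R)₊ ≤ |x| ≤ t+R}. Then there exists C₂ = C₂(p,a,b,R,j) > 0 such that ‖L(|U⁰|^{p−j}|U|^j)‖₂ ≤ C₂ (sup_{ℝ×[0,T]}|U⁰|)^{p−j} (‖U‖₂ D(T))^j. -/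

import Mathlib

set_option maxHeartbeats 1000000


open Real MeasureTheory Set
open scoped Classical

noncomputable section

/-- The Japanese bracket `⟨x⟩ = (1+x²)^{1/2}`. -/
def jap (x : ℝ) : ℝ := Real.sqrt (1 + x ^ 2)

/-- The characteristic weight `F(x,t) = ⟨t+⟨x⟩⟩^{-(1+a)} ⟨t-⟨x⟩⟩^{-(1+b)}`. -/
def cweight (a b x t : ℝ) : ℝ :=
  jap (t + jap x) ^ (-(1 + a)) * jap (t - jap x) ^ (-(1 + b))

/-- The Duhamel integral operator with the characteristic weight. -/
def duhamel (a b : ℝ) (V : ℝ → ℝ → ℝ) (x t : ℝ) : ℝ :=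
  (∫ s in (0:ℝ)..t, ∫ y in (x - t + s)..(x + t - s), V y s * cweight a b y s) / 2

/-- The weight `w(|x|,t)` of Section 4. -/
def wfun (a R x t : ℝ) : ℝ :=
  if 0 < a then 1
  else if a = 0 then (Real.log (t + |x| + 3 * R))⁻¹
  else (t + |x| + 3 * R) ^ a

/-- The quantity `D(T)` from Lemma 4.1. -/
def Dfun (a R T : ℝ) : ℝ :=
  if 0 < a then 1
  else if a = 0 then Real.log (T + 3 * R)
  else (T + 2 * R) ^ (-a)

lemma one_le_jap (x : ℝ) : 1 ≤ jap x := by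
  rw [jap, Real.one_le_sqrt]
  nlinarith [sq_nonneg x]

lemma jap_pos (x : ℝ) : 0 < jap x := lt_of_lt_of_le one_pos (one_le_jap x)

lemma abs_le_jap (x : ℝ) : |x| ≤ jap x := by
  rw [jap, ← Real.sqrt_sq_eq_abs]
  exact Real.sqrt_le_sqrt (by nlinarith)

lemma jap_le_one_add (x : ℝ) : jap x ≤ 1 + |x| := by
  rw [jap, show (1:ℝ) + |x| = Real.sqrt ((1+|x|)^2) by
    rw [Real.sqrt_sq (by positivity)]]
  exact Real.sqrt_le_sqrt (by nlinarith [abs_nonneg x, sq_abs x])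

lemma rpow_abs_bound {x c e : ℝ} (h1 : 1 ≤ x) (h2 : x ≤ c) : x ^ e ≤ c ^ |e| := by
  rcases le_or_gt 0 e with he | he
  · rw [abs_of_nonneg he]
    exact Real.rpow_le_rpow (by linarith) h2 he
  · calc x ^ e ≤ 1 := Real.rpow_le_one_of_one_le_of_nonpos h1 he.le
    _ ≤ c ^ |e| := Real.one_le_rpow (le_trans h1 h2) (abs_nonneg e)

/-- The key pointwise bound on the characteristic weight on the light-cone strip. -/
lemma cweight_bound {a b R : ℝ} (hR : 1 < R) {y s : ℝ} (hs : 0 ≤ s)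
    (hy1 : max 0 (s - R) ≤ |y|) (hy2 : |y| ≤ s + R) :
    cweight a b y s ≤ ((R+2) ^ |1+b| * max ((4*R)^(1+a)) 1) * (2*s+4*R) ^ (-(1+a)) := by
  have h4R : (0:ℝ) < 2*s+4*R := by linarith
  have hK0 : jap (s - jap y) ^ (-(1+b)) ≤ (R+2) ^ |1+b| := by
    have h1 : |s - jap y| ≤ R + 1 := by
      have := jap_le_one_add y
      have := abs_le_jap y
      have h2 : s - R ≤ |y| := le_trans (le_max_right _ _) hy1
      rw [abs_le]; constructor <;> nlinarith
    have : jap (s - jap y) ≤ R + 2 := le_trans (jap_le_one_add _) (by linarith [h1])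
    calc jap (s - jap y) ^ (-(1+b)) ≤ (R+2) ^ |(-(1+b))| :=
        rpow_abs_bound (one_le_jap _) this
      _ = (R+2) ^ |1+b| := by rw [abs_neg]
  have hK1 : jap (s + jap y) ^ (-(1+a)) ≤ max ((4*R)^(1+a)) 1 * (2*s+4*R) ^ (-(1+a)) := by
    rcases le_or_gt 0 (1+a) with ha | ha
    · -- exponent -(1+a) ≤ 0
      have hlow : (2*s+4*R) / (4*R) ≤ jap (s + jap y) := by
        have h1 : s + 1 ≤ jap (s + jap y) := by
          have := abs_le_jap (s + jap y)
          have := one_le_jap y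
          have : s + jap y ≤ |s + jap y| := le_abs_self _
          linarith [abs_le_jap (s + jap y), one_le_jap y]
        have : (2*s+4*R)/(4*R) ≤ s + 1 := by
          rw [div_le_iff₀ (by linarith)]; nlinarith
        linarith
      have h0 : (0:ℝ) < (2*s+4*R)/(4*R) := by positivity
      calc jap (s + jap y) ^ (-(1+a)) ≤ ((2*s+4*R)/(4*R)) ^ (-(1+a)) :=
          Real.rpow_le_rpow_of_nonpos h0 hlow (by linarith)
        _ = (2*s+4*R) ^ (-(1+a)) / (4*R) ^ (-(1+a)) :=
          Real.div_rpow (by linarith) (by linarith) _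
        _ = (4*R) ^ (1+a) * (2*s+4*R) ^ (-(1+a)) := by
          rw [Real.rpow_neg (by linarith : (0:ℝ) ≤ 4*R), div_inv_eq_mul, mul_comm]
        _ ≤ max ((4*R)^(1+a)) 1 * (2*s+4*R) ^ (-(1+a)) := by
          apply mul_le_mul_of_nonneg_right (le_max_left _ _) (by positivity)
    · -- exponent -(1+a) > 0
      have hup : jap (s + jap y) ≤ 2*s+4*R := by
        have h1 := jap_le_one_add (s + jap y)
        have h2 := jap_le_one_add y
        have h3 : |s + jap y| = s + jap y := abs_of_nonneg (by linarith [jap_pos y])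
        have h4 := abs_le_jap y
        rw [h3] at h1
        nlinarith [abs_nonneg y]
      calc jap (s + jap y) ^ (-(1+a)) ≤ (2*s+4*R) ^ (-(1+a)) :=
          Real.rpow_le_rpow (by linarith [jap_pos (s + jap y)]) hup (by linarith)
        _ ≤ max ((4*R)^(1+a)) 1 * (2*s+4*R) ^ (-(1+a)) := by
          nth_rewrite 1 [← one_mul ((2*s+4*R) ^ (-(1+a)))]
          apply mul_le_mul_of_nonneg_right (le_max_right _ _) (by positivity)
  have h1 : (0:ℝ) ≤ jap (s + jap y) ^ (-(1+a)) := Real.rpow_nonneg (jap_pos _).le _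
  have h2 : (0:ℝ) ≤ (R+2) ^ |1+b| := by positivity
  calc cweight a b y s = jap (s + jap y) ^ (-(1+a)) * jap (s - jap y) ^ (-(1+b)) := rfl
    _ ≤ (max ((4*R)^(1+a)) 1 * (2*s+4*R) ^ (-(1+a))) * ((R+2) ^ |1+b|) :=
      mul_le_mul hK1 hK0 (Real.rpow_nonneg (jap_pos _).le _)
        (mul_nonneg (le_trans zero_le_one (le_max_right _ _)) (by positivity))
    _ = ((R+2) ^ |1+b| * max ((4*R)^(1+a)) 1) * (2*s+4*R) ^ (-(1+a)) := by ring

lemma jap_continuous : Continuous jap := by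
  unfold jap; fun_prop

lemma wfun_pos {a R : ℝ} (hR : 1 < R) (x t : ℝ) (ht : 0 ≤ t) : 0 < wfun a R x t := by
  unfold wfun
  split_ifs with h1 h2
  · norm_num
  · rw [inv_pos]
    apply Real.log_pos
    have := abs_nonneg x; linarith
  · apply Real.rpow_pos_of_pos
    have := abs_nonneg x; linarith

lemma cweight_continuous (a b : ℝ) (s : ℝ) : Continuous (fun y => cweight a b y s) := by
  unfold cweight
  apply Continuous.mul
  · exact ((jap_continuous.comp (continuous_const.add jap_continuous)).rpow_const
      (fun y => Or.inl (jap_pos _).ne'))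
  · exact ((jap_continuous.comp (continuous_const.sub jap_continuous)).rpow_const
      (fun y => Or.inl (jap_pos _).ne'))

/-- Core estimate: the weighted Duhamel integral is controlled by the 1-d integral of
`(W s)^j (2s+4R)^{-(1+a)}`. -/
lemma duhamel_core (p a b R T : ℝ) (j : ℕ) (hp : 1 < p) (hR : 1 < R) (hj : j = 0 ∨ j = 1)
    (hT : 0 < T) (U U₀ : ℝ → ℝ → ℝ)
    (hUc : ContinuousOn (fun q : ℝ × ℝ => U q.1 q.2) (Set.univ ×ˢ Set.Icc 0 T))
    (hU₀c : ContinuousOn (fun q : ℝ × ℝ => U₀ q.1 q.2) (Set.univ ×ˢ Set.Icc 0 T))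
    (hU₀supp : ∀ x t : ℝ, 0 ≤ t → t ≤ T → (|x| < max 0 (t - R) ∨ t + R < |x|) → U₀ x t = 0)
    (N M : ℝ) (hN0 : 0 ≤ N) (hM0 : 0 ≤ M)
    (hNb : ∀ x t : ℝ, 0 ≤ t → t ≤ T → |U₀ x t| ≤ N)
    (hMb : ∀ x t : ℝ, 0 ≤ t → t ≤ T → wfun a R x t * |U x t| ≤ M)
    (W : ℝ → ℝ) (hWc : ContinuousOn W (Set.Icc 0 T)) (hW0 : ∀ s ∈ Set.Icc 0 T, 0 ≤ W s)
    (hWb : ∀ y s : ℝ, 0 ≤ s → s ≤ T → |y| ≤ s + R → (wfun a R y s)⁻¹ ≤ W s)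
    (x t : ℝ) (ht0 : 0 ≤ t) (htT : t ≤ T) :
    |duhamel a b (fun y s => |U₀ y s| ^ (p - (j:ℝ)) * |U y s| ^ (j:ℝ)) x t|
      ≤ (((R+2) ^ |1+b| * max ((4*R)^(1+a)) 1) * (2*R)) * N ^ (p - (j:ℝ)) * M ^ (j:ℝ) *
          ∫ s in (0:ℝ)..t, (W s) ^ (j:ℝ) * (2*s+4*R) ^ (-(1+a)) := by
  have hj1 : (j:ℝ) ≤ 1 := by rcases hj with h | h <;> simp [h]
  have hj0 : (0:ℝ) ≤ (j:ℝ) := Nat.cast_nonneg j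
  have he0 : 0 < p - (j:ℝ) := by linarith
  set K : ℝ := (R+2) ^ |1+b| * max ((4*R)^(1+a)) 1 with hK
  have hKpos : 0 < K := mul_pos (Real.rpow_pos_of_pos (by linarith) _)
    (lt_of_lt_of_le one_pos (le_max_right _ _))
  -- the inner integrand at time s
  set f : ℝ → ℝ → ℝ := fun s y => |U₀ y s| ^ (p - (j:ℝ)) * |U y s| ^ (j:ℝ) * cweight a b y s
    with hf
  -- the per-time bound
  set g : ℝ → ℝ := fun s => K * (N ^ (p - (j:ℝ)) * ((M * W s) ^ (j:ℝ) * (2*s+4*R) ^ (-(1+a))))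
    with hg
  have hg0 : ∀ s ∈ Set.Icc 0 T, 0 ≤ g s := by
    intro s hs
    have : (0:ℝ) ≤ M * W s := mul_nonneg hM0 (hW0 s hs)
    have h1 : (0:ℝ) ≤ (M * W s) ^ ((j:ℝ)) := Real.rpow_nonneg this _
    have h2 : (0:ℝ) ≤ (2*s+4*R) ^ (-(1+a)) := Real.rpow_nonneg (by have := hs.1; linarith) _
    positivity
  -- continuity of the inner integrand in y
  have hfc : ∀ s ∈ Set.Icc 0 T, Continuous (f s) := by
    intro s hs
    have hys : ∀ V : ℝ → ℝ → ℝ, ContinuousOn (fun q : ℝ × ℝ => V q.1 q.2)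
        (Set.univ ×ˢ Set.Icc 0 T) → Continuous (fun y => V y s) := by
      intro V hV
      exact hV.comp_continuous (continuous_id.prodMk continuous_const)
        (fun y => Set.mk_mem_prod (Set.mem_univ _) hs)
    apply Continuous.mul
    · apply Continuous.mul
      · exact ((continuous_abs.comp (hys U₀ hU₀c)).rpow_const (fun y => Or.inr he0.le))
      · exact ((continuous_abs.comp (hys U hUc)).rpow_const (fun y => Or.inr hj0))
    · exact cweight_continuous a b s
  -- pointwise bound on the strip; vanishing off the strip
  have hbound : ∀ s ∈ Set.Icc 0 t, ∀ y : ℝ,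
      (max 0 (s - R) ≤ |y| ∧ |y| ≤ s + R → |f s y| ≤ g s) ∧
      (¬(max 0 (s - R) ≤ |y| ∧ |y| ≤ s + R) → f s y = 0) := by
    intro s hs y
    have hs0 : 0 ≤ s := hs.1
    have hsT : s ≤ T := le_trans hs.2 htT
    constructor
    · rintro ⟨hy1, hy2⟩
      have hcw := cweight_bound (a := a) (b := b) hR hs0 hy1 hy2
      have hcw0 : 0 ≤ cweight a b y s :=
        mul_nonneg (Real.rpow_nonneg (jap_pos _).le _) (Real.rpow_nonneg (jap_pos _).le _)
      have hU₀b : |U₀ y s| ^ (p - (j:ℝ)) ≤ N ^ (p - (j:ℝ)) :=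
        Real.rpow_le_rpow (abs_nonneg _) (hNb y s hs0 hsT) he0.le
      have hUb : |U y s| ^ ((j:ℝ)) ≤ (M * W s) ^ ((j:ℝ)) := by
        apply Real.rpow_le_rpow (abs_nonneg _) _ hj0
        have hw := wfun_pos (a := a) hR y s hs0
        have h1 : |U y s| ≤ M / wfun a R y s :=
          (le_div_iff₀ hw).mpr (by rw [mul_comm]; exact hMb y s hs0 hsT)
        rw [div_eq_mul_inv] at h1
        calc |U y s| ≤ M * (wfun a R y s)⁻¹ := h1
          _ ≤ M * W s := by
            apply mul_le_mul_of_nonneg_left (hWb y s hs0 hsT hy2) hM0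
      have h1 : |f s y| = |U₀ y s| ^ (p - (j:ℝ)) * |U y s| ^ ((j:ℝ)) * cweight a b y s := by
        rw [hf]
        rw [abs_of_nonneg]
        positivity
      rw [h1, hg]
      calc |U₀ y s| ^ (p - (j:ℝ)) * |U y s| ^ ((j:ℝ)) * cweight a b y s
          ≤ N ^ (p - (j:ℝ)) * (M * W s) ^ ((j:ℝ)) * (K * (2*s+4*R) ^ (-(1+a))) := by
            apply mul_le_mul (mul_le_mul hU₀b hUb (Real.rpow_nonneg (abs_nonneg _) _)
              (Real.rpow_nonneg hN0 _)) hcw hcw0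
            exact mul_nonneg (Real.rpow_nonneg hN0 _)
              (Real.rpow_nonneg (mul_nonneg hM0 (hW0 s ⟨hs0, hsT⟩)) _)
        _ = K * (N ^ (p - (j:ℝ)) * ((M * W s) ^ ((j:ℝ)) * (2*s+4*R) ^ (-(1+a)))) := by ring
    · intro hy
      have : U₀ y s = 0 := by
        apply hU₀supp y s hs0 hsT
        rcases not_and_or.mp hy with h | h
        · left; linarith [not_le.mp h]
        · right; linarith [not_le.mp h]
      rw [hf]
      simp only [this, abs_zero]
      rw [Real.zero_rpow he0.ne', zero_mul, zero_mul]
  -- inner integral bound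
  have hinner : ∀ s ∈ Set.Icc 0 t,
      |∫ y in (x - t + s)..(x + t - s), f s y| ≤ g s * (4*R) := by
    intro s hs
    have hs0 : 0 ≤ s := hs.1
    have hsT : s ≤ T := le_trans hs.2 htT
    have hcd : x - t + s ≤ x + t - s := by linarith [hs.2]
    set strip : Set ℝ := {y : ℝ | max 0 (s - R) ≤ |y| ∧ |y| ≤ s + R} with hstrip
    have hms : MeasurableSet strip := by
      have : strip = {y : ℝ | max 0 (s - R) ≤ |y|} ∩ {y : ℝ | |y| ≤ s + R} := rfl
      rw [this]
      exact ((isClosed_le continuous_const continuous_abs).measurableSet).inter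
        ((isClosed_le continuous_abs continuous_const).measurableSet)
    have hfind : f s = strip.indicator (f s) := by
      funext y
      by_cases hy : y ∈ strip
      · rw [Set.indicator_of_mem hy]
      · rw [Set.indicator_of_notMem hy]
        exact (hbound s hs y).2 hy
    have hvol : volume (Set.Ioc (x - t + s) (x + t - s) ∩ strip) ≤ ENNReal.ofReal (4*R) := by
      have hsub : strip ⊆ Set.Icc (-(s+R)) (-(max 0 (s-R))) ∪ Set.Icc (max 0 (s-R)) (s+R) := by
        intro y hy
        obtain ⟨hy1, hy2⟩ := hy
        rcases le_or_gt 0 y with h | h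
        · right
          rw [abs_of_nonneg h] at hy1 hy2
          exact ⟨hy1, hy2⟩
        · left
          rw [abs_of_neg h] at hy1 hy2
          constructor <;> linarith
      have hlen : s + R - max 0 (s-R) ≤ 2*R := by
        rcases le_or_gt s R with h | h
        · have : max 0 (s-R) ≥ 0 := le_max_left _ _
          linarith
        · have : max 0 (s-R) = s - R := max_eq_right (by linarith)
          rw [this]; linarith
      calc volume (Set.Ioc (x - t + s) (x + t - s) ∩ strip)
          ≤ volume strip := measure_mono Set.inter_subset_right
        _ ≤ volume (Set.Icc (-(s+R)) (-(max 0 (s-R))) ∪ Set.Icc (max 0 (s-R)) (s+R)) :=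
            measure_mono hsub
        _ ≤ volume (Set.Icc (-(s+R)) (-(max 0 (s-R)))) + volume (Set.Icc (max 0 (s-R)) (s+R)) :=
            measure_union_le _ _
        _ ≤ ENNReal.ofReal (2*R) + ENNReal.ofReal (2*R) := by
            rw [Real.volume_Icc, Real.volume_Icc]
            exact add_le_add (ENNReal.ofReal_le_ofReal (by linarith))
              (ENNReal.ofReal_le_ofReal hlen)
        _ = ENNReal.ofReal (4*R) := by
            rw [← ENNReal.ofReal_add (by linarith) (by linarith)]
            congr 1; ring
    have hvollt : volume (Set.Ioc (x - t + s) (x + t - s) ∩ strip) < ⊤ :=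
      lt_of_le_of_lt hvol ENNReal.ofReal_lt_top
    have gnn : 0 ≤ g s := hg0 s ⟨hs0, hsT⟩
    calc |∫ y in (x - t + s)..(x + t - s), f s y|
        = ‖∫ y in Set.Ioc (x-t+s) (x+t-s), f s y‖ := by
          rw [intervalIntegral.integral_of_le hcd, Real.norm_eq_abs]
      _ = ‖∫ y in Set.Ioc (x-t+s) (x+t-s) ∩ strip, f s y‖ := by
          rw [show (∫ y in Set.Ioc (x-t+s) (x+t-s), f s y)
              = ∫ y in Set.Ioc (x-t+s) (x+t-s), strip.indicator (f s) y from by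
            conv_lhs => rw [hfind]]
          rw [MeasureTheory.setIntegral_indicator hms]
      _ ≤ g s * (volume (Set.Ioc (x-t+s) (x+t-s) ∩ strip)).toReal := by
          apply MeasureTheory.norm_setIntegral_le_of_norm_le_const hvollt
          · intro y hy
            rw [Real.norm_eq_abs]
            exact (hbound s hs y).1 hy.2
      _ ≤ g s * (4*R) := by
          apply mul_le_mul_of_nonneg_left _ gnn
          exact ENNReal.toReal_le_of_le_ofReal (by linarith) hvol
  -- integrability of the bound
  set G : ℝ → ℝ := fun s => g s * (4*R) with hG
  have hIccsub : Set.Icc (0:ℝ) t ⊆ Set.Icc 0 T := Set.Icc_subset_Icc le_rfl htT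
  have hGc : ContinuousOn G (Set.Icc 0 t) := by
    have hWc' : ContinuousOn W (Set.Icc 0 t) := hWc.mono hIccsub
    have h1 : ContinuousOn (fun s : ℝ => (M * W s) ^ ((j:ℝ))) (Set.Icc 0 t) :=
      (continuousOn_const.mul hWc').rpow_const (fun x _ => Or.inr hj0)
    have h2 : ContinuousOn (fun s : ℝ => (2*s+4*R) ^ (-(1+a))) (Set.Icc 0 t) := by
      apply ContinuousOn.rpow_const
      · fun_prop
      · intro z hz
        left
        have := hz.1
        positivity
    exact ((continuousOn_const.mul (continuousOn_const.mul (h1.mul h2)))).mul continuousOn_const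
  have hGint : IntervalIntegrable G volume 0 t := by
    apply ContinuousOn.intervalIntegrable
    rwa [Set.uIcc_of_le ht0]
  -- outer integral bound
  set H : ℝ → ℝ := fun s => ∫ y in (x - t + s)..(x + t - s), f s y with hH
  have houter : |∫ s in (0:ℝ)..t, H s| ≤ ∫ s in (0:ℝ)..t, G s := by
    by_cases hHi : IntervalIntegrable H volume 0 t
    · calc |∫ s in (0:ℝ)..t, H s| ≤ ∫ s in (0:ℝ)..t, |H s| := by
            rw [← Real.norm_eq_abs]
            simpa using intervalIntegral.norm_integral_le_integral_norm (f := H) ht0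
        _ ≤ ∫ s in (0:ℝ)..t, G s :=
            intervalIntegral.integral_mono_on ht0 hHi.abs hGint (fun s hs => hinner s hs)
    · rw [intervalIntegral.integral_undef hHi, abs_zero]
      apply intervalIntegral.integral_nonneg ht0
      intro s hs
      exact mul_nonneg (hg0 s (hIccsub hs)) (by linarith)
  -- compute the integral of the bound
  have hGeq : ∫ s in (0:ℝ)..t, G s
      = (K * (4*R) * N ^ (p - (j:ℝ)) * M ^ ((j:ℝ))) *
          ∫ s in (0:ℝ)..t, (W s) ^ ((j:ℝ)) * (2*s+4*R) ^ (-(1+a)) := by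
    rw [← intervalIntegral.integral_const_mul]
    apply intervalIntegral.integral_congr
    intro s hs
    rw [Set.uIcc_of_le ht0] at hs
    simp only [hG, hg]
    rw [Real.mul_rpow hM0 (hW0 s (hIccsub hs))]
    ring
  -- conclusion
  have hd : duhamel a b (fun y s => |U₀ y s| ^ (p - (j:ℝ)) * |U y s| ^ ((j:ℝ))) x t
      = (∫ s in (0:ℝ)..t, H s) / 2 := rfl
  rw [hd, abs_div, abs_two]
  rw [div_le_iff₀ (by norm_num : (0:ℝ) < 2)]
  calc |∫ s in (0:ℝ)..t, H s| ≤ ∫ s in (0:ℝ)..t, G s := houter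
    _ = (K * (4*R) * N ^ (p - (j:ℝ)) * M ^ ((j:ℝ))) *
          ∫ s in (0:ℝ)..t, (W s) ^ ((j:ℝ)) * (2*s+4*R) ^ (-(1+a)) := hGeq
    _ = K * (2*R) * N ^ (p - (j:ℝ)) * M ^ ((j:ℝ)) *
          (∫ s in (0:ℝ)..t, (W s) ^ ((j:ℝ)) * (2*s+4*R) ^ (-(1+a))) * 2 := by ring

lemma int_shift {R t c : ℝ} (hR : 1 < R) (ht : 0 ≤ t) (hc : c ≠ -1) :
    ∫ s in (0:ℝ)..t, (2*s+4*R) ^ c = ((2*t+4*R) ^ (c+1) - (4*R) ^ (c+1)) / (2*(c+1)) := by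
  have h := intervalIntegral.integral_comp_mul_add (a := (0:ℝ)) (b := t)
    (fun u : ℝ => u ^ c) (two_ne_zero) (4*R)
  simp only [smul_eq_mul] at h
  have h0 : (0:ℝ) ∉ Set.uIcc (2*0+4*R) (2*t+4*R) := by
    rw [Set.uIcc_of_le (by linarith)]
    intro hmem
    have := hmem.1
    linarith
  rw [h, integral_rpow (Or.inr ⟨hc, h0⟩)]
  rw [show 2*(0:ℝ)+4*R = 4*R by ring]
  field_simp

lemma int_inv_shift {R t : ℝ} (hR : 1 < R) (ht : 0 ≤ t) :
    ∫ s in (0:ℝ)..t, (2*s+4*R)⁻¹ = (Real.log (2*t+4*R) - Real.log (4*R)) / 2 := by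
  have h := intervalIntegral.integral_comp_mul_add (a := (0:ℝ)) (b := t)
    (fun u : ℝ => u⁻¹) (two_ne_zero) (4*R)
  simp only [smul_eq_mul] at h
  have h0 : (0:ℝ) ∉ Set.uIcc (2*0+4*R) (2*t+4*R) := by
    rw [Set.uIcc_of_le (by linarith)]
    intro hmem
    have := hmem.1
    linarith
  rw [h, integral_inv h0]
  rw [show 2*(0:ℝ)+4*R = 4*R by ring]
  rw [Real.log_div (by linarith) (by linarith)]
  ring


/-- Lemma 4.1 (weighted a priori estimate):
`‖L(|U⁰|^{p-j} |U|^j)‖₂ ≤ C₂ (sup |U⁰|)^{p-j} (‖U‖₂ D(T))^j` for `j = 0, 1`,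
formulated via arbitrary bounds `N` for `sup_{ℝ×[0,T]} |U⁰|` and `M` for
`‖U‖₂ = sup_{ℝ×[0,T]} w(|x|,t)|U(x,t)|`. -/
theorem weighted_apriori_estimate_D (p a b R : ℝ) (j : ℕ)
    (hp : 1 < p) (hR : 1 < R) (hj : j = 0 ∨ j = 1) :
    ∃ C₂ > 0, ∀ T : ℝ, 0 < T → ∀ U U₀ : ℝ → ℝ → ℝ,
      ContinuousOn (fun q : ℝ × ℝ => U q.1 q.2) (Set.univ ×ˢ Set.Icc 0 T) →
      ContinuousOn (fun q : ℝ × ℝ => U₀ q.1 q.2) (Set.univ ×ˢ Set.Icc 0 T) →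
      (∀ x t : ℝ, 0 ≤ t → t ≤ T → t + R < |x| → U x t = 0) →
      (∀ x t : ℝ, 0 ≤ t → t ≤ T → (|x| < max 0 (t - R) ∨ t + R < |x|) → U₀ x t = 0) →
      ∀ N M : ℝ, 0 ≤ N → 0 ≤ M →
      (∀ x t : ℝ, 0 ≤ t → t ≤ T → |U₀ x t| ≤ N) →
      (∀ x t : ℝ, 0 ≤ t → t ≤ T → wfun a R x t * |U x t| ≤ M) →
      ∀ x t : ℝ, 0 ≤ t → t ≤ T →
        wfun a R x t *
            |duhamel a b (fun y s => |U₀ y s| ^ (p - (j:ℝ)) * |U y s| ^ (j:ℝ)) x t|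
          ≤ C₂ * N ^ (p - (j:ℝ)) * (M * Dfun a R T) ^ (j:ℝ) := by
  have hj1 : (j:ℝ) ≤ 1 := by rcases hj with h | h <;> simp [h]
  have hj0 : (0:ℝ) ≤ (j:ℝ) := Nat.cast_nonneg j
  have he0 : 0 < p - (j:ℝ) := by linarith
  have hA : 0 < (R+2) ^ |1+b| := Real.rpow_pos_of_pos (by linarith) _
  have hB : 0 < max ((4*R)^(1+a)) 1 := lt_of_lt_of_le one_pos (le_max_right _ _)
  have hKc : 0 < ((R+2) ^ |1+b| * max ((4*R)^(1+a)) 1) * (2*R) :=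
    mul_pos (mul_pos hA hB) (by linarith)
  rcases lt_trichotomy 0 a with ha | ha | ha
  · -- case a > 0
    refine ⟨(((R+2) ^ |1+b| * max ((4*R)^(1+a)) 1) * (2*R)) * ((4*R)^(-a) / (2*a)),
      mul_pos hKc (div_pos (Real.rpow_pos_of_pos (by linarith) _) (by linarith)), ?_⟩
    intro T hT U U₀ hUc hU₀c hUsupp hU₀supp N M hN0 hM0 hNb hMb x t ht0 htT
    have hwx : wfun a R x t = 1 := by unfold wfun; rw [if_pos ha]
    have hD : Dfun a R T = 1 := by unfold Dfun; rw [if_pos ha]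
    have hcore := duhamel_core p a b R T j hp hR hj hT U U₀ hUc hU₀c hU₀supp N M hN0 hM0
      hNb hMb (fun _ => 1) continuousOn_const (fun s _ => zero_le_one)
      (fun y s hs0 hsT hy => by unfold wfun; rw [if_pos ha]; norm_num) x t ht0 htT
    have hIeq : (∫ s in (0:ℝ)..t, ((1:ℝ)) ^ ((j:ℝ)) * (2*s+4*R) ^ (-(1+a)))
        = ∫ s in (0:ℝ)..t, (2*s+4*R) ^ (-(1+a)) := by
      apply intervalIntegral.integral_congr
      intro s _
      simp [Real.one_rpow]
    have hc : -(1+a) ≠ -1 := by intro h; linarith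
    have hIval := int_shift hR ht0 hc
    rw [show -(1+a)+1 = -a by ring] at hIval
    have hIle : (∫ s in (0:ℝ)..t, (2*s+4*R) ^ (-(1+a))) ≤ (4*R)^(-a) / (2*a) := by
      rw [hIval]
      have h1 : (0:ℝ) ≤ (2*t+4*R)^(-a) := Real.rpow_nonneg (by linarith) _
      calc ((2*t+4*R)^(-a) - (4*R)^(-a)) / (2*(-a))
          = ((4*R)^(-a) - (2*t+4*R)^(-a)) / (2*a) := by
            rw [div_eq_div_iff (by linarith) (by linarith)]
            ring
        _ ≤ ((4*R)^(-a) - 0) / (2*a) := by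
            apply div_le_div_of_nonneg_right ?_ (by linarith)
            linarith
        _ = (4*R)^(-a) / (2*a) := by rw [sub_zero]
    rw [hwx, hD, one_mul, mul_one]
    rw [hIeq] at hcore
    calc |duhamel a b (fun y s => |U₀ y s| ^ (p - (j:ℝ)) * |U y s| ^ (j:ℝ)) x t|
        ≤ (((R+2) ^ |1+b| * max ((4*R)^(1+a)) 1) * (2*R)) * N ^ (p - (j:ℝ)) * M ^ ((j:ℝ)) *
            ∫ s in (0:ℝ)..t, (2*s+4*R) ^ (-(1+a)) := hcore
      _ ≤ (((R+2) ^ |1+b| * max ((4*R)^(1+a)) 1) * (2*R)) * N ^ (p - (j:ℝ)) * M ^ ((j:ℝ)) *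
            ((4*R)^(-a) / (2*a)) := by
          apply mul_le_mul_of_nonneg_left hIle
          exact mul_nonneg (mul_nonneg hKc.le (Real.rpow_nonneg hN0 _))
            (Real.rpow_nonneg hM0 _)
      _ = (((R+2) ^ |1+b| * max ((4*R)^(1+a)) 1) * (2*R)) * ((4*R)^(-a) / (2*a)) *
            N ^ (p - (j:ℝ)) * M ^ ((j:ℝ)) := by ring
  · -- case a = 0
    subst ha
    refine ⟨(((R+2) ^ |1+b| * max ((4*R)^(1+(0:ℝ))) 1) * (2*R)) * 2,
      mul_pos hKc two_pos, ?_⟩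
    intro T hT U U₀ hUc hU₀c hUsupp hU₀supp N M hN0 hM0 hNb hMb x t ht0 htT
    have hwx : wfun 0 R x t = (Real.log (t + |x| + 3*R))⁻¹ := by
      unfold wfun; rw [if_neg (lt_irrefl 0), if_pos rfl]
    have hD : Dfun 0 R T = Real.log (T + 3*R) := by
      unfold Dfun; rw [if_neg (lt_irrefl 0), if_pos rfl]
    have habs := abs_nonneg x
    have hLx : 0 < Real.log (t + |x| + 3*R) := Real.log_pos (by linarith)
    have hLT : 0 < Real.log (T + 3*R) := Real.log_pos (by linarith)
    have hL2 : 0 ≤ Real.log (2*t+4*R) := Real.log_nonneg (by linarith)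
    have hWc : ContinuousOn (fun s : ℝ => Real.log (2*s+4*R)) (Set.Icc 0 T) := by
      apply ContinuousOn.log
      · fun_prop
      · intro s hs
        have := hs.1
        positivity
    have hW0 : ∀ s ∈ Set.Icc (0:ℝ) T, 0 ≤ Real.log (2*s+4*R) := by
      intro s hs
      exact Real.log_nonneg (by linarith [hs.1])
    have hWb : ∀ y s : ℝ, 0 ≤ s → s ≤ T → |y| ≤ s + R →
        (wfun 0 R y s)⁻¹ ≤ Real.log (2*s+4*R) := by
      intro y s hs0 hsT hy
      have : wfun 0 R y s = (Real.log (s + |y| + 3*R))⁻¹ := by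
        unfold wfun; rw [if_neg (lt_irrefl 0), if_pos rfl]
      rw [this, inv_inv]
      exact Real.log_le_log (by linarith [abs_nonneg y]) (by linarith)
    have hcore := duhamel_core p 0 b R T j hp hR hj hT U U₀ hUc hU₀c hU₀supp N M hN0 hM0
      hNb hMb (fun s => Real.log (2*s+4*R)) hWc hW0 hWb x t ht0 htT
    -- bound the 1-d integral
    have hcont1 : ContinuousOn (fun s : ℝ => Real.log (2*s+4*R) ^ ((j:ℝ)) *
        (2*s+4*R) ^ (-(1+(0:ℝ)))) (Set.uIcc 0 t) := by
      rw [Set.uIcc_of_le ht0]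
      apply ContinuousOn.mul
      · apply ContinuousOn.rpow_const
        · apply ContinuousOn.log
          · fun_prop
          · intro s hs; have := hs.1; positivity
        · exact fun s _ => Or.inr hj0
      · apply ContinuousOn.rpow_const
        · fun_prop
        · intro s hs; have := hs.1; left; positivity
    have hcont2 : ContinuousOn (fun s : ℝ => Real.log (2*t+4*R) ^ ((j:ℝ)) *
        (2*s+4*R) ^ (-(1+(0:ℝ)))) (Set.uIcc 0 t) := by
      rw [Set.uIcc_of_le ht0]
      apply ContinuousOn.mul continuousOn_const
      apply ContinuousOn.rpow_const
      · fun_prop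
      · intro s hs; have := hs.1; left; positivity
    have hIstep : (∫ s in (0:ℝ)..t, Real.log (2*s+4*R) ^ ((j:ℝ)) * (2*s+4*R) ^ (-(1+(0:ℝ))))
        ≤ Real.log (2*t+4*R) ^ ((j:ℝ)) * ((Real.log (2*t+4*R) - Real.log (4*R)) / 2) := by
      have h1 : (∫ s in (0:ℝ)..t, Real.log (2*s+4*R) ^ ((j:ℝ)) * (2*s+4*R) ^ (-(1+(0:ℝ))))
          ≤ ∫ s in (0:ℝ)..t, Real.log (2*t+4*R) ^ ((j:ℝ)) * (2*s+4*R) ^ (-(1+(0:ℝ))) := by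
        apply intervalIntegral.integral_mono_on ht0
          (hcont1.intervalIntegrable) (hcont2.intervalIntegrable)
        intro s hs
        apply mul_le_mul_of_nonneg_right
        · apply Real.rpow_le_rpow (Real.log_nonneg (by linarith [hs.1]))
            (Real.log_le_log (by linarith [hs.1]) (by linarith [hs.2])) hj0
        · exact Real.rpow_nonneg (by linarith [hs.1]) _
      have h2 : (∫ s in (0:ℝ)..t, Real.log (2*t+4*R) ^ ((j:ℝ)) * (2*s+4*R) ^ (-(1+(0:ℝ))))
          = Real.log (2*t+4*R) ^ ((j:ℝ)) * ((Real.log (2*t+4*R) - Real.log (4*R)) / 2) := by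
        rw [intervalIntegral.integral_const_mul]
        congr 1
        rw [show (∫ s in (0:ℝ)..t, (2*s+4*R) ^ (-(1+(0:ℝ))))
            = ∫ s in (0:ℝ)..t, (2*s+4*R)⁻¹ from by
          apply intervalIntegral.integral_congr
          intro s _
          show (2*s+4*R) ^ (-(1+(0:ℝ))) = (2*s+4*R)⁻¹
          rw [show -(1+(0:ℝ)) = -1 by norm_num, Real.rpow_neg_one]]
        exact int_inv_shift hR ht0
      rw [← h2] at *
      linarith
    have hb1 : Real.log (2*t+4*R) ≤ 2 * Real.log (t + |x| + 3*R) := by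
      calc Real.log (2*t+4*R) ≤ Real.log ((t+3*R) * (t+3*R)) :=
          Real.log_le_log (by linarith) (by nlinarith)
        _ = Real.log (t+3*R) + Real.log (t+3*R) :=
          Real.log_mul (by intro h; nlinarith) (by intro h; nlinarith)
        _ ≤ 2 * Real.log (t + |x| + 3*R) := by
          have h9 : Real.log (t+3*R) ≤ Real.log (t + |x| + 3*R) :=
            Real.log_le_log (by linarith) (by linarith)
          linarith
    have hb2 : Real.log (2*t+4*R) ^ ((j:ℝ)) ≤ 2 * Real.log (T + 3*R) ^ ((j:ℝ)) := by
      calc Real.log (2*t+4*R) ^ ((j:ℝ))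
          ≤ (2 * Real.log (T + 3*R)) ^ ((j:ℝ)) := by
            apply Real.rpow_le_rpow hL2 _ hj0
            calc Real.log (2*t+4*R) ≤ Real.log ((T+3*R) * (T+3*R)) :=
                Real.log_le_log (by linarith) (by nlinarith)
              _ = Real.log (T+3*R) + Real.log (T+3*R) :=
                Real.log_mul (by intro h; nlinarith) (by intro h; nlinarith)
              _ = 2 * Real.log (T+3*R) := by ring
        _ = 2 ^ ((j:ℝ)) * Real.log (T + 3*R) ^ ((j:ℝ)) :=
          Real.mul_rpow (by norm_num) hLT.le
        _ ≤ 2 * Real.log (T + 3*R) ^ ((j:ℝ)) := by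
          apply mul_le_mul_of_nonneg_right _ (Real.rpow_nonneg hLT.le _)
          calc (2:ℝ) ^ ((j:ℝ)) ≤ 2 ^ (1:ℝ) :=
            Real.rpow_le_rpow_of_exponent_le one_le_two hj1
            _ = 2 := Real.rpow_one 2
    have hNM : 0 ≤ (((R+2) ^ |1+b| * max ((4*R)^(1+(0:ℝ))) 1) * (2*R)) * N ^ (p - (j:ℝ)) *
        M ^ ((j:ℝ)) :=
      mul_nonneg (mul_nonneg hKc.le (Real.rpow_nonneg hN0 _)) (Real.rpow_nonneg hM0 _)
    rw [hwx, hD]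
    calc (Real.log (t + |x| + 3*R))⁻¹ *
          |duhamel 0 b (fun y s => |U₀ y s| ^ (p - (j:ℝ)) * |U y s| ^ (j:ℝ)) x t|
        ≤ (Real.log (t + |x| + 3*R))⁻¹ *
            ((((R+2) ^ |1+b| * max ((4*R)^(1+(0:ℝ))) 1) * (2*R)) * N ^ (p - (j:ℝ)) *
              M ^ ((j:ℝ)) *
              (Real.log (2*t+4*R) ^ ((j:ℝ)) * ((Real.log (2*t+4*R) - Real.log (4*R)) / 2))) := by
          apply mul_le_mul_of_nonneg_left _ (inv_nonneg.mpr hLx.le)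
          exact le_trans hcore (mul_le_mul_of_nonneg_left hIstep hNM)
      _ ≤ (Real.log (t + |x| + 3*R))⁻¹ *
            ((((R+2) ^ |1+b| * max ((4*R)^(1+(0:ℝ))) 1) * (2*R)) * N ^ (p - (j:ℝ)) *
              M ^ ((j:ℝ)) *
              (Real.log (2*t+4*R) ^ ((j:ℝ)) * (Real.log (2*t+4*R) / 2))) := by
          apply mul_le_mul_of_nonneg_left _ (inv_nonneg.mpr hLx.le)
          apply mul_le_mul_of_nonneg_left _ hNM
          apply mul_le_mul_of_nonneg_left _ (Real.rpow_nonneg hL2 _)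
          have : 0 ≤ Real.log (4*R) := Real.log_nonneg (by linarith)
          linarith
      _ = ((((R+2) ^ |1+b| * max ((4*R)^(1+(0:ℝ))) 1) * (2*R)) * N ^ (p - (j:ℝ)) *
              M ^ ((j:ℝ))) * (Real.log (2*t+4*R) ^ ((j:ℝ))) *
              ((Real.log (t + |x| + 3*R))⁻¹ * Real.log (2*t+4*R)) / 2 := by
          ring
      _ ≤ ((((R+2) ^ |1+b| * max ((4*R)^(1+(0:ℝ))) 1) * (2*R)) * N ^ (p - (j:ℝ)) *
              M ^ ((j:ℝ))) * (2 * Real.log (T + 3*R) ^ ((j:ℝ))) * 2 / 2 := by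
          rw [div_le_div_iff_of_pos_right two_pos]
          apply mul_le_mul
          · exact mul_le_mul_of_nonneg_left hb2 hNM
          · calc (Real.log (t + |x| + 3*R))⁻¹ * Real.log (2*t+4*R)
                ≤ (Real.log (t + |x| + 3*R))⁻¹ * (Real.log (t + |x| + 3*R) * 2) := by
                  apply mul_le_mul_of_nonneg_left _ (inv_nonneg.mpr hLx.le)
                  linarith
              _ = 2 := by field_simp
          · exact mul_nonneg (inv_nonneg.mpr hLx.le) hL2
          · exact mul_nonneg hNM
              (mul_nonneg (by norm_num) (Real.rpow_nonneg hLT.le _))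
      _ = (((R+2) ^ |1+b| * max ((4*R)^(1+(0:ℝ))) 1) * (2*R)) * 2 * N ^ (p - (j:ℝ)) *
            (M ^ ((j:ℝ)) * Real.log (T + 3*R) ^ ((j:ℝ))) := by ring
      _ = (((R+2) ^ |1+b| * max ((4*R)^(1+(0:ℝ))) 1) * (2*R)) * 2 * N ^ (p - (j:ℝ)) *
            (M * Real.log (T + 3*R)) ^ ((j:ℝ)) := by
          rw [Real.mul_rpow hM0 hLT.le]
  · -- case a < 0
    have hna : (0:ℝ) < -a := by linarith
    have hc1pos : (0:ℝ) < -a * ((j:ℝ)+1) := mul_pos hna (by linarith)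
    refine ⟨(((R+2) ^ |1+b| * max ((4*R)^(1+a)) 1) * (2*R)) *
      ((2:ℝ)^(-a) * (2:ℝ)^(-a)) / (2 * (-a * ((j:ℝ)+1))),
      div_pos (mul_pos hKc (mul_pos (Real.rpow_pos_of_pos two_pos _)
        (Real.rpow_pos_of_pos two_pos _))) (by linarith), ?_⟩
    intro T hT U U₀ hUc hU₀c hUsupp hU₀supp N M hN0 hM0 hNb hMb x t ht0 htT
    have hnlt : ¬ (0 < a) := by linarith
    have habs := abs_nonneg x
    have hwx : wfun a R x t = (t + |x| + 3*R) ^ a := by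
      unfold wfun; rw [if_neg hnlt, if_neg ha.ne]
    have hD : Dfun a R T = (T + 2*R) ^ (-a) := by
      unfold Dfun; rw [if_neg hnlt, if_neg ha.ne]
    have hWc : ContinuousOn (fun s : ℝ => (2*s+4*R) ^ (-a)) (Set.Icc 0 T) := by
      apply ContinuousOn.rpow_const
      · fun_prop
      · intro s hs; have := hs.1; left; positivity
    have hW0 : ∀ s ∈ Set.Icc (0:ℝ) T, 0 ≤ (2*s+4*R) ^ (-a) := by
      intro s hs
      exact Real.rpow_nonneg (by linarith [hs.1]) _
    have hWb : ∀ y s : ℝ, 0 ≤ s → s ≤ T → |y| ≤ s + R →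
        (wfun a R y s)⁻¹ ≤ (2*s+4*R) ^ (-a) := by
      intro y s hs0 hsT hy
      have haby := abs_nonneg y
      have hbp : (0:ℝ) < s + |y| + 3*R := by linarith
      have h1 : wfun a R y s = (s + |y| + 3*R) ^ a := by
        unfold wfun; rw [if_neg hnlt, if_neg ha.ne]
      rw [h1, ← Real.rpow_neg hbp.le]
      exact Real.rpow_le_rpow hbp.le (by linarith) hna.le
    have hcore := duhamel_core p a b R T j hp hR hj hT U U₀ hUc hU₀c hU₀supp N M hN0 hM0
      hNb hMb (fun s => (2*s+4*R) ^ (-a)) hWc hW0 hWb x t ht0 htT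
    set c : ℝ := -a * (j:ℝ) + -(1+a) with hcdef
    have hc1 : c + 1 = -a * ((j:ℝ)+1) := by rw [hcdef]; ring
    have hIeq : (∫ s in (0:ℝ)..t, ((2*s+4*R) ^ (-a)) ^ ((j:ℝ)) * (2*s+4*R) ^ (-(1+a)))
        = ∫ s in (0:ℝ)..t, (2*s+4*R) ^ c := by
      apply intervalIntegral.integral_congr
      intro s hs
      rw [Set.uIcc_of_le ht0] at hs
      have hsp : (0:ℝ) < 2*s+4*R := by linarith [hs.1]
      show ((2*s+4*R) ^ (-a)) ^ ((j:ℝ)) * (2*s+4*R) ^ (-(1+a)) = (2*s+4*R) ^ c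
      rw [← Real.rpow_mul hsp.le, ← Real.rpow_add hsp, hcdef]
    have hcne : c ≠ -1 := by
      intro h
      rw [h] at hc1
      norm_num at hc1
      nlinarith
    have hIval := int_shift hR ht0 hcne
    have hIle : (∫ s in (0:ℝ)..t, (2*s+4*R) ^ c)
        ≤ (2*t+4*R) ^ (c+1) / (2*(c+1)) := by
      rw [hIval]
      apply div_le_div_of_nonneg_right ?_ ?_
      · linarith [Real.rpow_nonneg (by linarith : (0:ℝ) ≤ 4*R) (c+1)]
      · rw [hc1]; linarith
    -- pieces for the final estimate
    have hxp : (0:ℝ) < t + |x| + 3*R := by linarith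
    have h2t : (0:ℝ) < 2*t+4*R := by linarith
    have hE2 : (t + |x| + 3*R) ^ a * (2*t+4*R) ^ (-a) ≤ 2 ^ (-a) := by
      have h1 : (2*t+4*R) ^ (-a) ≤ (2*(t + |x| + 3*R)) ^ (-a) :=
        Real.rpow_le_rpow h2t.le (by linarith) hna.le
      have h2 : ((2:ℝ)*(t + |x| + 3*R)) ^ (-a) = 2^(-a) * (t + |x| + 3*R)^(-a) :=
        Real.mul_rpow (by norm_num) hxp.le
      calc (t + |x| + 3*R) ^ a * (2*t+4*R) ^ (-a)
          ≤ (t + |x| + 3*R) ^ a * (2^(-a) * (t + |x| + 3*R)^(-a)) := by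
            apply mul_le_mul_of_nonneg_left _ (Real.rpow_nonneg hxp.le _)
            rw [← h2]; exact h1
        _ = 2^(-a) * ((t + |x| + 3*R) ^ a * (t + |x| + 3*R)^(-a)) := by ring
        _ = 2^(-a) := by
            rw [← Real.rpow_add hxp, add_neg_cancel, Real.rpow_zero, mul_one]
    have hE3 : ((2*t+4*R) ^ (-a)) ^ ((j:ℝ)) ≤ 2^(-a) * ((T+2*R)^(-a)) ^ ((j:ℝ)) := by
      have h1 : (2*t+4*R) ^ (-a) ≤ (2*(T+2*R)) ^ (-a) :=
        Real.rpow_le_rpow h2t.le (by linarith) hna.le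
      have h2 : ((2:ℝ)*(T+2*R)) ^ (-a) = 2^(-a) * (T+2*R)^(-a) :=
        Real.mul_rpow (by norm_num) (by linarith)
      calc ((2*t+4*R) ^ (-a)) ^ ((j:ℝ)) ≤ (2^(-a) * (T+2*R)^(-a)) ^ ((j:ℝ)) := by
            apply Real.rpow_le_rpow (Real.rpow_nonneg h2t.le _) _ hj0
            rw [← h2]; exact h1
        _ = (2^(-a)) ^ ((j:ℝ)) * ((T+2*R)^(-a)) ^ ((j:ℝ)) :=
            Real.mul_rpow (Real.rpow_nonneg (by norm_num) _)
              (Real.rpow_nonneg (by linarith) _)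
        _ ≤ 2^(-a) * ((T+2*R)^(-a)) ^ ((j:ℝ)) := by
            apply mul_le_mul_of_nonneg_right _
              (Real.rpow_nonneg (Real.rpow_nonneg (by linarith) _) _)
            calc ((2:ℝ)^(-a)) ^ ((j:ℝ)) ≤ ((2:ℝ)^(-a)) ^ (1:ℝ) :=
                Real.rpow_le_rpow_of_exponent_le
                  (Real.one_le_rpow one_le_two hna.le) hj1
              _ = 2^(-a) := Real.rpow_one _
    have hE1 : (2*t+4*R) ^ (c+1) = (2*t+4*R) ^ (-a) * ((2*t+4*R) ^ (-a)) ^ ((j:ℝ)) := by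
      rw [← Real.rpow_mul h2t.le, ← Real.rpow_add h2t, hc1]
      ring_nf
    have hNM : 0 ≤ (((R+2) ^ |1+b| * max ((4*R)^(1+a)) 1) * (2*R)) * N ^ (p - (j:ℝ)) *
        M ^ ((j:ℝ)) :=
      mul_nonneg (mul_nonneg hKc.le (Real.rpow_nonneg hN0 _)) (Real.rpow_nonneg hM0 _)
    rw [hwx, hD]
    rw [hIeq] at hcore
    calc (t + |x| + 3*R) ^ a *
          |duhamel a b (fun y s => |U₀ y s| ^ (p - (j:ℝ)) * |U y s| ^ (j:ℝ)) x t|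
        ≤ (t + |x| + 3*R) ^ a *
            ((((R+2) ^ |1+b| * max ((4*R)^(1+a)) 1) * (2*R)) * N ^ (p - (j:ℝ)) *
              M ^ ((j:ℝ)) * ((2*t+4*R) ^ (c+1) / (2*(c+1)))) := by
          apply mul_le_mul_of_nonneg_left _ (Real.rpow_nonneg hxp.le _)
          exact le_trans hcore (mul_le_mul_of_nonneg_left hIle hNM)
      _ = ((((R+2) ^ |1+b| * max ((4*R)^(1+a)) 1) * (2*R)) * N ^ (p - (j:ℝ)) *
              M ^ ((j:ℝ))) *
            (((t + |x| + 3*R) ^ a * (2*t+4*R) ^ (-a)) * ((2*t+4*R) ^ (-a)) ^ ((j:ℝ))) /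
            (2*(c+1)) := by
          rw [hE1]; ring
      _ ≤ ((((R+2) ^ |1+b| * max ((4*R)^(1+a)) 1) * (2*R)) * N ^ (p - (j:ℝ)) *
              M ^ ((j:ℝ))) *
            ((2^(-a)) * (2^(-a) * ((T+2*R)^(-a)) ^ ((j:ℝ)))) / (2*(c+1)) := by
          apply div_le_div_of_nonneg_right _ (by rw [hc1]; linarith)
          apply mul_le_mul_of_nonneg_left _ hNM
          apply mul_le_mul hE2 hE3 (Real.rpow_nonneg (Real.rpow_nonneg h2t.le _) _)
            (Real.rpow_nonneg (by norm_num) _)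
      _ = ((((R+2) ^ |1+b| * max ((4*R)^(1+a)) 1) * (2*R)) * (2^(-a) * 2^(-a)) /
            (2 * (-a * ((j:ℝ)+1)))) * N ^ (p - (j:ℝ)) *
            (M ^ ((j:ℝ)) * ((T+2*R)^(-a)) ^ ((j:ℝ))) := by
          rw [hc1]; ring
      _ = ((((R+2) ^ |1+b| * max ((4*R)^(1+a)) 1) * (2*R)) * (2^(-a) * 2^(-a)) /
            (2 * (-a * ((j:ℝ)+1)))) * N ^ (p - (j:ℝ)) *
            (M * (T+2*R)^(-a)) ^ ((j:ℝ)) := by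
          rw [Real.mul_rpow hM0 (Real.rpow_nonneg (by linarith) _)]


end
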